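/- Let g : ℝ → ℝ be differentiable with ‖g'‖_∞ = C < ∞, where g(x) = F_ν^{-1}(Φ(x)) for a probability measure ν with CDF F_ν. Then there exist K > 0 and σ > 0 such that F_ν(x) ≤ Φ(x/σ) for all x < -K, and F_ν(x) ≥ Φ(x/σ) for all x > K. -/

import Mathlib

open MeasureTheory ProbabilityTheory Set Filter Topology
open scoped ENNReal

lemma gaussian_measure_pos (s : Set ℝ) (hs : MeasureTheory.volume s ≠ 0) :
    0 < gaussianReal 0 1 s := by
  rw [pos_iff_ne_zero]
  intro h
  exact hs ((gaussianReal_absolutelyContinuous' 0 one_ne_zero) h)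

lemma gauss_cdf_pos (x : ℝ) : 0 < cdf (gaussianReal 0 1) x := by
  rw [cdf_eq_real, measureReal_def]
  refine ENNReal.toReal_pos ?_ (measure_ne_top _ _)
  refine (gaussian_measure_pos _ ?_).ne'
  simp [Real.volume_Iic]

lemma gauss_cdf_lt_one (x : ℝ) : cdf (gaussianReal 0 1) x < 1 := by
  rw [cdf_eq_real, measureReal_def]
  have h1 : gaussianReal 0 1 (Iic x) < 1 := by
    have hcompl : 0 < gaussianReal 0 1 (Ioi x) := by
      refine gaussian_measure_pos _ ?_
      simp [Real.volume_Ioi]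
    have hadd : gaussianReal 0 1 (Iic x) + gaussianReal 0 1 (Ioi x) = 1 := by
      rw [← measure_univ (μ := gaussianReal 0 1), ← Iic_union_Ioi (a := x)]
      exact (measure_union (Iic_disjoint_Ioi le_rfl) measurableSet_Ioi).symm
    calc gaussianReal 0 1 (Iic x) < gaussianReal 0 1 (Iic x) + gaussianReal 0 1 (Ioi x) :=
          ENNReal.lt_add_right (measure_ne_top _ _) hcompl.ne'
      _ = 1 := hadd
  calc (gaussianReal 0 1 (Iic x)).toReal < (1 : ℝ≥0∞).toReal := by
        refine ENNReal.toReal_strict_mono (by simp) h1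
    _ = 1 := by simp

/-- If `g = F_ν^{-1} ∘ Φ` is differentiable with bounded derivative, then the tails
of `ν` are dominated by the tails of a centered normal distribution. -/
theorem tails_dominated (ν : Measure ℝ) [IsProbabilityMeasure ν] (g : ℝ → ℝ)
    (hg : ∀ x, g x = sInf {y : ℝ | cdf (gaussianReal 0 1) x < cdf ν y})
    (hdiff : Differentiable ℝ g) (C : ℝ)
    (hC : ∀ x, |deriv g x| ≤ C) :
    ∃ K > (0 : ℝ), ∃ σ > (0 : ℝ),
      (∀ x < -K, cdf ν x ≤ cdf (gaussianReal 0 1) (x / σ)) ∧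
      (∀ x > K, cdf (gaussianReal 0 1) (x / σ) ≤ cdf ν x) := by
  set Φ : ℝ → ℝ := fun x => cdf (gaussianReal 0 1) x with hΦ
  set F : ℝ → ℝ := fun x => cdf ν x with hF
  set C' : ℝ := max C 1 with hC'def
  have hC'pos : 0 < C' := lt_of_lt_of_le one_pos (le_max_right _ _)
  -- Lipschitz bound
  have hLip : ∀ a b : ℝ, |g a - g b| ≤ C' * |a - b| := by
    intro a b
    have := convex_univ.norm_image_sub_le_of_norm_deriv_le
      (fun x _ => hdiff x)
      (fun x _ => by
        rw [Real.norm_eq_abs]; exact le_trans (hC x) (le_max_left C 1))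
      (mem_univ b) (mem_univ a)
    simpa [Real.norm_eq_abs] using this
  -- nonemptiness and boundedness of the sets
  have hne : ∀ x : ℝ, {y : ℝ | Φ x < F y}.Nonempty := by
    intro x
    have h1 : ∀ᶠ y in atTop, Φ x < F y :=
      (tendsto_cdf_atTop ν).eventually (eventually_gt_nhds (gauss_cdf_lt_one x))
    exact h1.exists
  have hbdd : ∀ x : ℝ, BddBelow {y : ℝ | Φ x < F y} := by
    intro x
    have h1 : ∀ᶠ y in atBot, F y < Φ x :=
      (tendsto_cdf_atBot ν).eventually (eventually_lt_nhds (gauss_cdf_pos x))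
    obtain ⟨b, hb⟩ := h1.exists
    refine ⟨b, fun y hy => ?_⟩
    by_contra hyb
    push_neg at hyb
    exact absurd (lt_of_le_of_lt (monotone_cdf ν hyb.le) hb) (not_lt.mpr hy.le)
  -- key fact A : Φ x ≤ F (g x)
  have hA : ∀ x : ℝ, Φ x ≤ F (g x) := by
    intro x
    have hrc : ContinuousWithinAt F (Ici (g x)) (g x) := (cdf ν).right_continuous (g x)
    have htendsto : Tendsto F (𝓝[>] (g x)) (𝓝 (F (g x))) :=
      hrc.tendsto.mono_left (nhdsWithin_mono _ Ioi_subset_Ici_self)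
    refine ge_of_tendsto htendsto ?_
    filter_upwards [self_mem_nhdsWithin] with y hy
    have hy' : g x < y := hy
    rw [hg x] at hy'
    obtain ⟨z, hz, hzy⟩ := (csInf_lt_iff (hbdd x) (hne x)).mp hy'
    exact le_trans (le_of_lt hz) (monotone_cdf ν hzy.le)
  -- key fact B : y < g x → F y ≤ Φ x
  have hB : ∀ x y : ℝ, y < g x → F y ≤ Φ x := by
    intro x y hy
    by_contra h
    push_neg at h
    have : g x ≤ y := by
      rw [hg x]
      exact csInf_le (hbdd x) h
    exact absurd this (not_le.mpr hy)
  refine ⟨2 * |g 0| + 1, by positivity, 2 * C', by positivity, ?_, ?_⟩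
  · -- left tail
    intro x hx
    set t : ℝ := x / (2 * C') with ht
    have hxneg : x < 0 := by
      have : (0:ℝ) ≤ 2 * |g 0| + 1 := by positivity
      linarith
    have htneg : t < 0 := div_neg_of_neg_of_pos hxneg (by positivity)
    have hgt : x < g t := by
      have h1 : |g t - g 0| ≤ C' * |t - 0| := hLip t 0
      have h2 : |t - 0| = -t := by rw [sub_zero, abs_of_neg htneg]
      rw [h2] at h1
      have h3 : C' * (-t) = -x / 2 := by
        rw [ht]; field_simp
      have h4 : g 0 - g t ≤ -x / 2 := by
        calc g 0 - g t ≤ |g t - g 0| := by rw [abs_sub_comm]; exact le_abs_self _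
          _ ≤ -x / 2 := le_trans h1 (le_of_eq h3)
      have h5 : -|g 0| ≤ g 0 := neg_abs_le _
      linarith
    exact hB t x hgt
  · -- right tail
    intro x hx
    have hxpos : 0 < x := by
      have : (0:ℝ) ≤ 2 * |g 0| := by positivity
      linarith
    set t : ℝ := (x - g 0) / C' with ht
    have htpos : 0 < t := by
      have : g 0 ≤ |g 0| := le_abs_self _
      have : g 0 < x := by linarith
      exact div_pos (by linarith) hC'pos
    have hgt : g t ≤ x := by
      have h1 : |g t - g 0| ≤ C' * |t - 0| := hLip t 0
      have h2 : |t - 0| = t := by rw [sub_zero, abs_of_pos htpos]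
      rw [h2] at h1
      have h3 : C' * t = x - g 0 := by
        rw [ht]; field_simp
      have h4 : g t - g 0 ≤ x - g 0 := le_trans (le_abs_self _) (h1.trans_eq h3)
      linarith
    have hmono : Φ (x / (2 * C')) ≤ Φ t := by
      refine monotone_cdf _ ?_
      rw [ht, div_le_div_iff₀ (by positivity) hC'pos]
      have : g 0 ≤ |g 0| := le_abs_self _
      nlinarith
    calc Φ (x / (2 * C')) ≤ Φ t := hmono
      _ ≤ F (g t) := hA t
      _ ≤ F x := monotone_cdf ν hgt
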